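/- Let K be a field with char K ≠ 2 and let 𝔤 be a Lie algebra over K. Let ρ: χ(𝔤) → 𝔤 ⊕ 𝔤 ⊕ 𝔤 be the homomorphism with ρ(x) = (x, x, 0) and ρ(x^ψ) = (0, x, x) for x ∈ 𝔤, and set W(𝔤) = ker ρ. Then W(𝔤) = L(𝔤) ∩ D(𝔤), W(𝔤) is central in L(𝔤) + D(𝔤) (i.e. [W(𝔤), L(𝔤) + D(𝔤)] = 0), and in particular W(𝔤) is an abelian ideal of χ(𝔤). -/

import Mathlib

/- Formalization of a statement from "Weak commutativity for Lie algebras"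
   (arXiv:1808.10303). All Lie algebras are over a fixed field `K` with `char K ≠ 2`. -/

universe u v w

set_option linter.unusedVariables false

section ProdLie

variable (L : Type*) (M : Type*) [LieRing L] [LieRing M]

/-- The direct sum of two Lie rings, with componentwise bracket. -/
instance prodLieRing : LieRing (L × M) where
  bracket p q := (⁅p.1, q.1⁆, ⁅p.2, q.2⁆)
  add_lie p q r := by refine Prod.ext ?_ ?_ <;> dsimp <;> exact add_lie _ _ _
  lie_add p q r := by refine Prod.ext ?_ ?_ <;> dsimp <;> exact lie_add _ _ _
  lie_self p := by refine Prod.ext ?_ ?_ <;> dsimp <;> simp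
  leibniz_lie p q r := by refine Prod.ext ?_ ?_ <;> dsimp <;> exact leibniz_lie _ _ _

/-- The direct sum of two Lie algebras. -/
instance prodLieAlgebra (K : Type*) [CommRing K] [LieAlgebra K L] [LieAlgebra K M] :
    LieAlgebra K (L × M) where
  lie_smul t p q := by refine Prod.ext ?_ ?_ <;> exact lie_smul _ _ _

end ProdLie

section WeakCommutativity

variable (K : Type u) [Field K] (g : Type v) [LieRing g] [LieAlgebra K g]

/-- The image of `x ∈ g` (first copy) in the free Lie algebra on two copies of `g`. -/
noncomputable def ofl (x : g) : FreeLieAlgebra K (g ⊕ g) := FreeLieAlgebra.of K (Sum.inl x)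

/-- The image of `xᵠ ∈ gᵠ` (second copy) in the free Lie algebra on two copies of `g`. -/
noncomputable def ofr (x : g) : FreeLieAlgebra K (g ⊕ g) := FreeLieAlgebra.of K (Sum.inr x)

/-- Relators presenting `χ(g)` as a quotient of the free Lie algebra on the disjoint union of
two copies of (the underlying type of) `g`: the relations presenting the free Lie product
(coproduct) of `g` and its copy `gᵠ`, together with the weak commutativity relations
`⁅x, xᵠ⁆ = 0` for all `x ∈ g`. -/
def chiRelators : Set (FreeLieAlgebra K (g ⊕ g)) :=
  { z | (∃ x y : g, z = ofl K g (x + y) - ofl K g x - ofl K g y)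
      ∨ (∃ (c : K) (x : g), z = ofl K g (c • x) - c • ofl K g x)
      ∨ (∃ x y : g, z = ofl K g ⁅x, y⁆ - ⁅ofl K g x, ofl K g y⁆)
      ∨ (∃ x y : g, z = ofr K g (x + y) - ofr K g x - ofr K g y)
      ∨ (∃ (c : K) (x : g), z = ofr K g (c • x) - c • ofr K g x)
      ∨ (∃ x y : g, z = ofr K g ⁅x, y⁆ - ⁅ofr K g x, ofr K g y⁆)
      ∨ (∃ x : g, z = ⁅ofl K g x, ofr K g x⁆) }

/-- The ideal of relations defining `χ(g)`. -/
noncomputable def chiIdeal : LieIdeal K (FreeLieAlgebra K (g ⊕ g)) :=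
  LieSubmodule.lieSpan K (FreeLieAlgebra K (g ⊕ g)) (chiRelators K g)

/-- Sidki's weak commutativity Lie algebra `χ(g)`: the quotient of the free Lie product of
two isomorphic copies `g`, `gᵠ` of `g` by the ideal generated by the brackets `⁅x, xᵠ⁆`. -/
abbrev chi : Type (max u v) := FreeLieAlgebra K (g ⊕ g) ⧸ chiIdeal K g

/-- The canonical image of `x ∈ g` (first copy) in `χ(g)`. -/
noncomputable def chiι (x : g) : chi K g :=
  LieSubmodule.Quotient.mk (N := chiIdeal K g) (ofl K g x)

/-- The canonical image of `xᵠ` (the second copy of `x ∈ g`) in `χ(g)`. -/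
noncomputable def chiψ (x : g) : chi K g :=
  LieSubmodule.Quotient.mk (N := chiIdeal K g) (ofr K g x)

/-- The ideal `L(g) ⊆ χ(g)`, generated by the elements `x - xᵠ` for `x ∈ g`. -/
noncomputable def chiL : LieIdeal K (chi K g) :=
  LieSubmodule.lieSpan K (chi K g) (Set.range fun x : g => chiι K g x - chiψ K g x)

/-- The ideal `D(g) ⊆ χ(g)`, generated by the brackets `⁅x, yᵠ⁆` for `x, y ∈ g`. -/
noncomputable def chiD : LieIdeal K (chi K g) :=
  LieSubmodule.lieSpan K (chi K g) { z | ∃ x y : g, z = ⁅chiι K g x, chiψ K g y⁆ }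

end WeakCommutativity

/-!
Write `ℓ x = x - xᵠ` and `σ x = x + xᵠ`. Polarizing `⁅x, xᵠ⁆ = 0` gives `⁅yᵠ, x⁆ = ⁅y, xᵠ⁆`,
hence `⁅ℓ x, σ y⁆ = ℓ ⁅x, y⁆`, `2 ⁅u, vᵠ⁆ = σ ⁅u, v⁆ - ⁅ℓ u, ℓ v⁆` and
`4 ⁅u, vᵠ⁆ = ⁅σ u, σ v⁆ - ⁅ℓ u, ℓ v⁆`. Bracketing with `ℓ x`, both `2 ⁅ℓ x, ⁅u, vᵠ⁆⁆` and
`4 ⁅ℓ x, ⁅u, vᵠ⁆⁆` become `ℓ ⁅x, ⁅u, v⁆⁆ - ⁅ℓ x, ⁅ℓ u, ℓ v⁆⁆`, so `ℓ(g)` centralizes the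
generators of `D(g)`. The centralizer of `ℓ(g)` is normalized by `σ(g)` and `ℓ(g)`, hence, as `2` is
invertible, by all of `χ(g)`; so it is an ideal, contains `D(g)`, and `⁅L(g), D(g)⁆ = 0`.

Write `ρ = (ρ₁, ρ₂, ρ₃)`. Modulo `L(g)` every `z` is congruent to `ρ₂ z` (as `x ≡ xᵠ`), so
`ker ρ₂ = L(g)`; modulo `D(g)` it is congruent to `ρ₁ z + (ρ₃ z)ᵠ`, because `(a, b) ↦ a + bᵠ` is a
homomorphism modulo `D(g)`, so `ker ρ₁ ⊓ ker ρ₃ = D(g)`. Hence `ker ρ = L(g) ⊓ D(g)`, and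
`⁅L ⊓ D, L ⊔ D⁆ ≤ ⁅D, L⁆ ⊔ ⁅L, D⁆ = 0`.
-/

section LieAlgebra

variable {R A M : Type*} [CommRing R] [LieRing A] [LieAlgebra R A] [LieRing M] [LieAlgebra R M]

variable (R) in
def LieSubalgebra.centralizer (s : Set A) : LieSubalgebra R A where
  carrier := {a | ∀ x ∈ s, ⁅x, a⁆ = 0}
  zero_mem' _ _ := lie_zero _
  add_mem' ha hb x hx := by rw [lie_add, ha x hx, hb x hx, add_zero]
  smul_mem' c _ ha x hx := by rw [lie_smul, ha x hx, smul_zero]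
  lie_mem' ha hb x hx := by rw [leibniz_lie, ha x hx, hb x hx, zero_lie, lie_zero, add_zero]

theorem LieSubalgebra.subset_normalizer_centralizer (s : Set A) :
    s ⊆ (LieSubalgebra.centralizer R s).normalizer := fun x hx =>
  (LieSubalgebra.mem_normalizer_iff _ x).mpr fun d hd => hd x hx ▸ LieSubalgebra.zero_mem _

theorem LieSubalgebra.lieSpan_subset_of_normalizer_eq_top {S : LieSubalgebra R A}
    (hS : S.normalizer = ⊤) {T : Set A} (hT : T ⊆ S) :
    (LieSubmodule.lieSpan R A T : Set A) ⊆ S := by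
  intro a ha
  induction ha using LieSubmodule.lieSpan_induction with
  | mem x hx => exact hT hx
  | zero => exact S.zero_mem
  | add _ _ _ _ hx hy => exact S.add_mem hx hy
  | smul c _ _ hx => exact S.smul_mem c hx
  | lie x _ _ hy => exact (S.mem_normalizer_iff x).mp (hS ▸ LieSubalgebra.mem_top x) _ hy

theorem LieHom.ext_of_lieSpan_eq_top {s : Set A} (hs : LieSubalgebra.lieSpan R A s = ⊤)
    {f₁ f₂ : A →ₗ⁅R⁆ M} (h : Set.EqOn f₁ f₂ s) : f₁ = f₂ := by
  ext a
  have ha : a ∈ LieSubalgebra.lieSpan R A s := hs ▸ LieSubalgebra.mem_top a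
  induction ha using LieSubalgebra.lieSpan_induction with
  | mem x hx => exact h hx
  | zero => simp only [map_zero]
  | add _ _ _ _ hx hy => simp only [map_add, hx, hy]
  | smul c _ _ hx => simp only [map_smul, hx]
  | lie _ _ _ _ hx hy => simp only [LieHom.map_lie, hx, hy]

def LieHom.addOfCommute (f₁ f₂ : A →ₗ⁅R⁆ M) (h : ∀ a b, ⁅f₁ a, f₂ b⁆ = 0) : A →ₗ⁅R⁆ M where
  toLinearMap := (f₁ : A →ₗ[R] M) + f₂
  map_lie' {a b} := by
    have h' : ⁅f₂ a, f₁ b⁆ = 0 := by rw [← lie_skew, h, neg_zero]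
    change f₁ ⁅a, b⁆ + f₂ ⁅a, b⁆ = ⁅f₁ a + f₂ a, f₁ b + f₂ b⁆
    rw [add_lie, lie_add, lie_add, h, h', LieHom.map_lie, LieHom.map_lie, add_zero, zero_add]

@[simp]
theorem LieHom.addOfCommute_apply (f₁ f₂ : A →ₗ⁅R⁆ M) (h : ∀ a b, ⁅f₁ a, f₂ b⁆ = 0) (a : A) :
    f₁.addOfCommute f₂ h a = f₁ a + f₂ a :=
  rfl

def LieIdeal.mkQ (I : LieIdeal R A) : A →ₗ⁅R⁆ A ⧸ I :=
  { LieSubmodule.Quotient.mk' I with map_lie' := rfl }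

theorem LieIdeal.mkQ_surjective (I : LieIdeal R A) : Function.Surjective I.mkQ :=
  LieSubmodule.Quotient.surjective_mk' I

@[simp]
theorem LieIdeal.mkQ_eq_zero {I : LieIdeal R A} {a : A} : I.mkQ a = 0 ↔ a ∈ I :=
  LieSubmodule.Quotient.mk_eq_zero'

theorem LieIdeal.mkQ_eq_mkQ {I : LieIdeal R A} {a b : A} : I.mkQ a = I.mkQ b ↔ a - b ∈ I :=
  Submodule.Quotient.eq I.toSubmodule

theorem LieIdeal.lie_inf_sup_eq_bot {I J : LieIdeal R A} (h : ⁅I, J⁆ = ⊥) : ⁅I ⊓ J, I ⊔ J⁆ = ⊥ := by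
  rw [LieSubmodule.lie_sup, eq_bot_iff, sup_le_iff]
  constructor
  · calc ⁅I ⊓ J, I⁆ ≤ ⁅J, I⁆ := LieSubmodule.mono_lie_left _ inf_le_right
      _ = ⊥ := by rw [LieSubmodule.lie_comm, h]
  · calc ⁅I ⊓ J, J⁆ ≤ ⁅I, J⁆ := LieSubmodule.mono_lie_left _ inf_le_left
      _ = ⊥ := h

end LieAlgebra

section WeakCommutativity

variable {R g A : Type*} [CommRing R] [LieRing g] [LieAlgebra R g] [LieRing A] [LieAlgebra R A]
  {ι ψ : g →ₗ⁅R⁆ A}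

def LieHom.WeaklyCommute (ι ψ : g →ₗ⁅R⁆ A) : Prop :=
  ∀ x, ⁅ι x, ψ x⁆ = 0

namespace LieHom.WeaklyCommute

theorem lie_comm (hw : ι.WeaklyCommute ψ) (a b : g) : ⁅ψ a, ι b⁆ = ⁅ι a, ψ b⁆ := by
  have h := hw (a + b)
  rw [map_add, map_add, add_lie, lie_add, lie_add, hw a, hw b, zero_add, add_zero] at h
  rw [← lie_skew, ← eq_neg_of_add_eq_zero_left h]

theorem lie_sub_add (hw : ι.WeaklyCommute ψ) (a b : g) :
    ⁅ι a - ψ a, ι b + ψ b⁆ = ι ⁅a, b⁆ - ψ ⁅a, b⁆ := by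
  simp only [sub_lie, lie_add, ← LieHom.map_lie, hw.lie_comm a b]
  abel

theorem two_smul_lie (hw : ι.WeaklyCommute ψ) (u v : g) :
    (2 : R) • ⁅ι u, ψ v⁆ = ι ⁅u, v⁆ + ψ ⁅u, v⁆ - ⁅ι u - ψ u, ι v - ψ v⁆ := by
  simp only [two_smul, sub_lie, lie_sub, ← LieHom.map_lie, hw.lie_comm u v]
  abel

theorem two_smul_two_smul_lie (hw : ι.WeaklyCommute ψ) (u v : g) :
    (2 : R) • (2 : R) • ⁅ι u, ψ v⁆ = ⁅ι u + ψ u, ι v + ψ v⁆ - ⁅ι u - ψ u, ι v - ψ v⁆ := by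
  simp only [two_smul, add_lie, lie_add, sub_lie, lie_sub, hw.lie_comm u v]
  abel

theorem lie_sub_lie_add_lie_add (hw : ι.WeaklyCommute ψ) (x u v : g) :
    ⁅ι x - ψ x, ⁅ι u + ψ u, ι v + ψ v⁆⁆ = ι ⁅x, ⁅u, v⁆⁆ - ψ ⁅x, ⁅u, v⁆⁆ := by
  rw [leibniz_lie, hw.lie_sub_add, ← lie_skew (ι u + ψ u), hw.lie_sub_add, hw.lie_sub_add,
    hw.lie_sub_add, leibniz_lie x u v, ← lie_skew ⁅x, v⁆ u]
  simp only [map_add, map_neg]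
  abel

theorem two_smul_lie_sub_lie_eq_zero (hw : ι.WeaklyCommute ψ) (x u v : g) :
    (2 : R) • ⁅ι x - ψ x, ⁅ι u, ψ v⁆⁆ = 0 := by
  have h2 : (2 : R) • ⁅ι x - ψ x, ⁅ι u, ψ v⁆⁆ =
      ι ⁅x, ⁅u, v⁆⁆ - ψ ⁅x, ⁅u, v⁆⁆ - ⁅ι x - ψ x, ⁅ι u - ψ u, ι v - ψ v⁆⁆ := by
    rw [← lie_smul, hw.two_smul_lie, lie_sub, hw.lie_sub_add]
  have h4 : (2 : R) • (2 : R) • ⁅ι x - ψ x, ⁅ι u, ψ v⁆⁆ =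
      ι ⁅x, ⁅u, v⁆⁆ - ψ ⁅x, ⁅u, v⁆⁆ - ⁅ι x - ψ x, ⁅ι u - ψ u, ι v - ψ v⁆⁆ := by
    rw [← lie_smul, ← lie_smul, hw.two_smul_two_smul_lie, lie_sub, hw.lie_sub_lie_add_lie_add]
  have h := h4.trans h2.symm
  rwa [two_smul R ((2 : R) • _), add_eq_left] at h

theorem add_mem_normalizer_centralizer (hw : ι.WeaklyCommute ψ) (w : g) :
    ι w + ψ w ∈ (LieSubalgebra.centralizer R (Set.range fun x => ι x - ψ x)).normalizer := by
  rw [LieSubalgebra.mem_normalizer_iff]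
  rintro d hd _ ⟨x, rfl⟩
  rw [leibniz_lie, hw.lie_sub_add, hd _ (Set.mem_range_self _), hd _ (Set.mem_range_self x),
    lie_zero, add_zero]

theorem normalizer_centralizer_eq_top [Invertible (2 : R)] (hw : ι.WeaklyCommute ψ)
    (hgen : LieSubalgebra.lieSpan R A (Set.range ι ∪ Set.range ψ) = ⊤) :
    (LieSubalgebra.centralizer R (Set.range fun x => ι x - ψ x)).normalizer = ⊤ := by
  rw [eq_top_iff, ← hgen, LieSubalgebra.lieSpan_le]
  have hσ := hw.add_mem_normalizer_centralizer
  have hℓ (w : g) := LieSubalgebra.subset_normalizer_centralizer (R := R)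
    (Set.range fun x => ι x - ψ x) (Set.mem_range_self w)
  rintro _ (⟨w, rfl⟩ | ⟨w, rfl⟩)
  · have hι : ι w = ⅟(2 : R) • ((ι w + ψ w) + (ι w - ψ w)) := by
      rw [add_add_sub_cancel, ← two_smul R, invOf_smul_smul]
    rw [hι]
    exact LieSubalgebra.smul_mem _ _ (add_mem (hσ w) (hℓ w))
  · have hψ : ψ w = ⅟(2 : R) • ((ι w + ψ w) - (ι w - ψ w)) := by
      rw [add_sub_sub_cancel, ← two_smul R, invOf_smul_smul]
    rw [hψ]
    exact LieSubalgebra.smul_mem _ _ (sub_mem (hσ w) (hℓ w))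

theorem lie_lieSpan_sub_lieSpan_lie_eq_bot [Invertible (2 : R)] (hw : ι.WeaklyCommute ψ)
    (hgen : LieSubalgebra.lieSpan R A (Set.range ι ∪ Set.range ψ) = ⊤) :
    ⁅LieSubmodule.lieSpan R A (Set.range fun x => ι x - ψ x),
      LieSubmodule.lieSpan R A {z | ∃ x y, z = ⁅ι x, ψ y⁆}⁆ = ⊥ := by
  set D := LieSubmodule.lieSpan R A {z | ∃ x y, z = ⁅ι x, ψ y⁆}
  have hD : (D : Set A) ⊆ LieSubalgebra.centralizer R (Set.range fun x => ι x - ψ x) := by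
    refine LieSubalgebra.lieSpan_subset_of_normalizer_eq_top
      (hw.normalizer_centralizer_eq_top hgen) ?_
    rintro _ ⟨u, v, rfl⟩ _ ⟨x, rfl⟩
    rw [← invOf_smul_smul (2 : R) ⁅ι x - ψ x, ⁅ι u, ψ v⁆⁆, hw.two_smul_lie_sub_lie_eq_zero,
      smul_zero]
  -- `LieModule.ker R A D` is the centralizer of the ideal `D`.
  have hL : LieSubmodule.lieSpan R A (Set.range fun x => ι x - ψ x) ≤ LieModule.ker R A D := by
    rw [LieSubmodule.lieSpan_le]
    rintro _ ⟨x, rfl⟩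
    rw [SetLike.mem_coe, LieModule.mem_ker]
    rintro ⟨d, hd⟩
    exact Subtype.ext (hD hd _ (Set.mem_range_self x))
  rw [LieSubmodule.lie_eq_bot_iff]
  intro a ha d hd
  exact congrArg Subtype.val ((LieModule.mem_ker R A D a).mp (hL ha) ⟨d, hd⟩)

end LieHom.WeaklyCommute

end WeakCommutativity

section Kernels

variable {R g A : Type*} [CommRing R] [LieRing g] [LieAlgebra R g] [LieRing A] [LieAlgebra R A]
  {ι ψ : g →ₗ⁅R⁆ A}

theorem LieHom.ker_eq_lieSpan_sub (hgen : LieSubalgebra.lieSpan R A (Set.range ι ∪ Set.range ψ) = ⊤)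
    (f : A →ₗ⁅R⁆ g) (hfι : ∀ x, f (ι x) = x) (hfψ : ∀ x, f (ψ x) = x) :
    f.ker = LieSubmodule.lieSpan R A (Set.range fun x => ι x - ψ x) := by
  set L : LieIdeal R A := LieSubmodule.lieSpan R A (Set.range fun x => ι x - ψ x)
  have hsec : L.mkQ.comp (ι.comp f) = L.mkQ := by
    refine LieHom.ext_of_lieSpan_eq_top hgen ?_
    rintro _ (⟨x, rfl⟩ | ⟨x, rfl⟩)
    · simp only [LieHom.comp_apply, hfι]
    · rw [LieHom.comp_apply, LieHom.comp_apply, hfψ, LieIdeal.mkQ_eq_mkQ]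
      exact LieSubmodule.subset_lieSpan ⟨x, rfl⟩
  apply le_antisymm
  · intro z hz
    rw [← LieIdeal.mkQ_eq_zero, ← hsec, LieHom.comp_apply, LieHom.comp_apply,
      (LieHom.mem_ker).mp hz, map_zero, map_zero]
  · rw [LieSubmodule.lieSpan_le]
    rintro _ ⟨x, rfl⟩
    rw [SetLike.mem_coe, LieHom.mem_ker, map_sub, hfι, hfψ, sub_self]

theorem LieHom.ker_inf_ker_eq_lieSpan_lie
    (hgen : LieSubalgebra.lieSpan R A (Set.range ι ∪ Set.range ψ) = ⊤) (f₁ f₂ : A →ₗ⁅R⁆ g)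
    (h₁ι : ∀ x, f₁ (ι x) = x) (h₁ψ : ∀ x, f₁ (ψ x) = 0)
    (h₂ι : ∀ x, f₂ (ι x) = 0) (h₂ψ : ∀ x, f₂ (ψ x) = x) :
    f₁.ker ⊓ f₂.ker = LieSubmodule.lieSpan R A {z | ∃ x y, z = ⁅ι x, ψ y⁆} := by
  set D : LieIdeal R A := LieSubmodule.lieSpan R A {z | ∃ x y, z = ⁅ι x, ψ y⁆}
  have hcomm : ∀ a b, ⁅D.mkQ.comp (ι.comp f₁) a, D.mkQ.comp (ψ.comp f₂) b⁆ = 0 := by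
    intro a b
    simp only [LieHom.comp_apply]
    rw [← LieHom.map_lie, LieIdeal.mkQ_eq_zero]
    exact LieSubmodule.subset_lieSpan ⟨_, _, rfl⟩
  have hsec : (D.mkQ.comp (ι.comp f₁)).addOfCommute (D.mkQ.comp (ψ.comp f₂)) hcomm = D.mkQ := by
    refine LieHom.ext_of_lieSpan_eq_top hgen ?_
    rintro _ (⟨x, rfl⟩ | ⟨x, rfl⟩) <;> simp [h₁ι, h₁ψ, h₂ι, h₂ψ]
  apply le_antisymm
  · intro z hz
    rw [LieSubmodule.mem_inf, LieHom.mem_ker, LieHom.mem_ker] at hz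
    rw [← LieIdeal.mkQ_eq_zero, ← hsec]
    simp [hz.1, hz.2]
  · rw [LieSubmodule.lieSpan_le]
    rintro _ ⟨x, y, rfl⟩
    simp [h₁ι, h₁ψ, h₂ι, h₂ψ]

end Kernels

section Chi

variable (K : Type u) [Field K] (g : Type v) [LieRing g] [LieAlgebra K g]

theorem mkQ_chiIdeal_eq_zero {z : FreeLieAlgebra K (g ⊕ g)} (hz : z ∈ chiRelators K g) :
    (chiIdeal K g).mkQ z = 0 :=
  LieIdeal.mkQ_eq_zero.mpr (LieSubmodule.subset_lieSpan hz)

@[simp]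
theorem mkQ_chiIdeal_ofl (x : g) : (chiIdeal K g).mkQ (ofl K g x) = chiι K g x :=
  rfl

@[simp]
theorem mkQ_chiIdeal_ofr (x : g) : (chiIdeal K g).mkQ (ofr K g x) = chiψ K g x :=
  rfl

noncomputable def chiιHom : g →ₗ⁅K⁆ chi K g where
  toFun := chiι K g
  map_add' x y := by
    simpa [sub_sub, sub_eq_zero] using mkQ_chiIdeal_eq_zero K g (Or.inl ⟨x, y, rfl⟩)
  map_smul' c x := by
    simpa [sub_eq_zero] using mkQ_chiIdeal_eq_zero K g (Or.inr (Or.inl ⟨c, x, rfl⟩))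
  map_lie' {x y} := by
    simpa [sub_eq_zero] using mkQ_chiIdeal_eq_zero K g (Or.inr (Or.inr (Or.inl ⟨x, y, rfl⟩)))

noncomputable def chiψHom : g →ₗ⁅K⁆ chi K g where
  toFun := chiψ K g
  map_add' x y := by
    simpa [sub_sub, sub_eq_zero] using
      mkQ_chiIdeal_eq_zero K g (Or.inr (Or.inr (Or.inr (Or.inl ⟨x, y, rfl⟩))))
  map_smul' c x := by
    simpa [sub_eq_zero] using
      mkQ_chiIdeal_eq_zero K g (Or.inr (Or.inr (Or.inr (Or.inr (Or.inl ⟨c, x, rfl⟩)))))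
  map_lie' {x y} := by
    simpa [sub_eq_zero] using
      mkQ_chiIdeal_eq_zero K g (Or.inr (Or.inr (Or.inr (Or.inr (Or.inr (Or.inl ⟨x, y, rfl⟩))))))

@[simp]
theorem chiιHom_apply (x : g) : chiιHom K g x = chiι K g x :=
  rfl

@[simp]
theorem chiψHom_apply (x : g) : chiψHom K g x = chiψ K g x :=
  rfl

theorem chiιHom_weaklyCommute_chiψHom : (chiιHom K g).WeaklyCommute (chiψHom K g) := fun x => by
  simpa using mkQ_chiIdeal_eq_zero K g (Or.inr (Or.inr (Or.inr (Or.inr (Or.inr (Or.inr ⟨x, rfl⟩))))))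

theorem chi_lieSpan_range_eq_top :
    LieSubalgebra.lieSpan K (chi K g) (Set.range (chiιHom K g) ∪ Set.range (chiψHom K g)) =
      ⊤ := by
  set S := LieSubalgebra.lieSpan K (chi K g) (Set.range (chiιHom K g) ∪ Set.range (chiψHom K g))
  let f : FreeLieAlgebra K (g ⊕ g) →ₗ⁅K⁆ S := FreeLieAlgebra.lift K <| Sum.elim
    (fun x => ⟨chiι K g x, LieSubalgebra.subset_lieSpan (Or.inl ⟨x, rfl⟩)⟩)
    (fun x => ⟨chiψ K g x, LieSubalgebra.subset_lieSpan (Or.inr ⟨x, rfl⟩)⟩)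
  have hf : S.incl.comp f = (chiIdeal K g).mkQ :=
    FreeLieAlgebra.hom_ext fun a => by
      cases a <;> exact congrArg Subtype.val (FreeLieAlgebra.lift_of_apply _ _)
  rw [eq_top_iff]
  rintro z -
  obtain ⟨w, rfl⟩ := (chiIdeal K g).mkQ_surjective z
  rw [← hf]
  exact (f w).2

end Chi

/-- Let `ρ : χ(g) → g ⊕ g ⊕ g` be the homomorphism with `ρ(x) = (x, x, 0)`
and `ρ(xᵠ) = (0, x, x)`, and let `W(g) = ker ρ`. Then `W(g) = L(g) ⊓ D(g)`, `W(g)` is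
central in `L(g) + D(g)`, and in particular `W(g)` is an abelian ideal of `χ(g)`. -/
theorem chi_W_eq_inf_and_central
    (K : Type u) [Field K] (hchar : ringChar K ≠ 2)
    (g : Type v) [LieRing g] [LieAlgebra K g]
    (ρ : chi K g →ₗ⁅K⁆ g × g × g)
    (hρι : ∀ x : g, ρ (chiι K g x) = (x, x, 0))
    (hρψ : ∀ x : g, ρ (chiψ K g x) = (0, x, x)) :
    ρ.ker = chiL K g ⊓ chiD K g ∧
      (∀ w ∈ ρ.ker, ∀ z ∈ chiL K g ⊔ chiD K g, ⁅w, z⁆ = 0) ∧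
      (∀ w ∈ ρ.ker, ∀ w' ∈ ρ.ker, ⁅w, w'⁆ = 0) := by
  have : Invertible (2 : K) := invertibleOfNonzero (Ring.two_ne_zero hchar)
  have hgen := chi_lieSpan_range_eq_top K g
  have hL : ((LieHom.fst K g g).comp ((LieHom.snd K g (g × g)).comp ρ)).ker = chiL K g :=
    LieHom.ker_eq_lieSpan_sub hgen _ (by simp [hρι]) (by simp [hρψ])
  have hD : ((LieHom.fst K g (g × g)).comp ρ).ker ⊓
      ((LieHom.snd K g g).comp ((LieHom.snd K g (g × g)).comp ρ)).ker = chiD K g :=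
    LieHom.ker_inf_ker_eq_lieSpan_lie hgen _ _ (by simp [hρι]) (by simp [hρψ]) (by simp [hρι])
      (by simp [hρψ])
  have hker : ρ.ker = chiL K g ⊓ chiD K g := by
    rw [← hL, ← hD]
    ext z
    simp only [LieSubmodule.mem_inf, LieHom.mem_ker, LieHom.comp_apply, LieHom.fst_apply,
      LieHom.snd_apply, Prod.ext_iff, Prod.fst_zero, Prod.snd_zero]
    tauto
  have hLD : ⁅chiL K g, chiD K g⁆ = ⊥ :=
    (chiιHom_weaklyCommute_chiψHom K g).lie_lieSpan_sub_lieSpan_lie_eq_bot hgen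
  have hcentral := LieIdeal.lie_inf_sup_eq_bot hLD
  rw [← hker, LieSubmodule.lie_eq_bot_iff] at hcentral
  exact ⟨hker, hcentral, fun w hw w' hw' =>
    hcentral w hw w' ((inf_le_left.trans le_sup_left : chiL K g ⊓ chiD K g ≤ _) (hker ▸ hw'))⟩
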